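/- Let G=(V,E) be a finite simple graph, ω: E → ℚ an edge-weight function, and k a positive integer. Let χ and χ' be (k−1)-optimal c-colorings of G and let v ∈ V be a vertex whose distance in G to every vertex of D_flip(χ,χ') is at least k+1. If there is no improving k-neighbor χ̂ of χ with v ∈ D_flip(χ,χ̂), then there is no improving k-neighbor χ̃ of χ' with v ∈ D_flip(χ',χ̃). -/

import Mathlib

/-!
Suppose `χ'` has an improving `k`-neighbour `χt` flipping `v`. Its at most `k` flipped vertices,
one of them `v` itself, realise at most `k - 1` distances from `v` in `1, …, k`, so some radius
`r ≤ k` is missed. Let `N` be the open ball of radius `r` around `v`. Edges leaving `N` end at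
distance exactly `r`, where `χt` agrees with `χ'`; hence the weight change of `χt` splits into the
part inside `N` and the part outside. The outer part flips fewer than `k` vertices and so cannot
gain, by `(k-1)`-optimality of `χ'`, so the inner part alone improves `χ'`. Since `χ` and `χ'`
coincide within distance `k` of `v`, in particular on `N` and its boundary, performing the same
inner recolouring on `χ` gains exactly as much: an improving `k`-neighbour of `χ` flipping `v`.
-/

open Finset
open scoped Classical

noncomputable def properEdges {V : Type*} [Fintype V] {α : Type*}
    (G : SimpleGraph V) (χ : V → α) : Finset (Sym2 V) :=
  G.edgeFinset.filter fun e => ¬ (Sym2.map χ e).IsDiag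

noncomputable def flipSet {V : Type*} [Fintype V] {α : Type*}
    (χ χ' : V → α) : Finset V :=
  univ.filter fun v => χ v ≠ χ' v

def IsImprovingKNeighbor {V : Type*} [Fintype V] {c : ℕ}
    (G : SimpleGraph V) (ω : Sym2 V → ℚ) (k : ℕ) (χ χ' : V → Fin c) : Prop :=
  (flipSet χ χ').card ≤ k ∧
    (∑ e ∈ properEdges G χ, ω e) < (∑ e ∈ properEdges G χ', ω e)

noncomputable def weight {V : Type*} [Fintype V] {α : Type*}
    (G : SimpleGraph V) (ω : Sym2 V → ℚ) (χ : V → α) : ℚ :=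
  ∑ e ∈ properEdges G χ, ω e

section Colorings

variable {V α : Type*} [Fintype V]

lemma mem_flipSet {χ χ' : V → α} {x : V} : x ∈ flipSet χ χ' ↔ χ x ≠ χ' x := by
  simp [flipSet]

lemma mem_flipSet_piecewise_self_right {S : Set V} {f g : V → α} {x : V} :
    x ∈ flipSet g (S.piecewise f g) ↔ x ∈ S ∧ x ∈ flipSet g f := by
  by_cases hx : x ∈ S <;> simp [mem_flipSet, hx]

lemma mem_flipSet_piecewise_self_left {S : Set V} {f g : V → α} {x : V} :
    x ∈ flipSet g (S.piecewise g f) ↔ x ∉ S ∧ x ∈ flipSet g f := by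
  by_cases hx : x ∈ S <;> simp [mem_flipSet, hx]

variable (G : SimpleGraph V) (ω : Sym2 V → ℚ)

/-- Each edge sees the same pair of colourings on both sides. -/
lemma weight_piecewise_add_weight_piecewise (S : Set V) (f g p q : V → α)
    (hbd : ∀ a b, G.Adj a b → a ∈ S → b ∉ S → p b = q b) :
    weight G ω (S.piecewise f p) + weight G ω (S.piecewise g q) =
      weight G ω (S.piecewise f q) + weight G ω (S.piecewise g p) := by
  simp only [weight, properEdges, sum_filter, ← sum_add_distrib]
  refine sum_congr rfl fun e he => ?_
  induction e using Sym2.ind with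
  | _ a b =>
    have hab : G.Adj a b := SimpleGraph.mem_edgeFinset.mp he
    simp only [Sym2.map_mk, Sym2.mk_isDiag_iff]
    by_cases ha : a ∈ S <;> by_cases hb : b ∈ S
    · simp [ha, hb]
    · simp [ha, hb, hbd a b hab ha hb]
    · simp [ha, hb, hbd b a hab.symm hb ha]
    · simp [ha, hb, add_comm]

lemma weight_piecewise_sub_weight_eq (S : Set V) (f χ χ' : V → α)
    (hS : ∀ x ∈ S, χ x = χ' x) (hbd : ∀ a b, G.Adj a b → a ∈ S → b ∉ S → χ b = χ' b) :
    weight G ω (S.piecewise f χ) - weight G ω χ =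
      weight G ω (S.piecewise f χ') - weight G ω χ' := by
  have hχ : S.piecewise χ' χ = χ := by
    ext x
    by_cases hx : x ∈ S <;> simp [hx, hS]
  have := weight_piecewise_add_weight_piecewise G ω S f χ' χ χ' hbd
  rw [Set.piecewise_same, hχ] at this
  linarith

/-- The part of `χt` outside `S` flips fewer than `k` vertices, so by `(k-1)`-optimality it
cannot gain; by `weight_piecewise_add_weight_piecewise` the part inside `S` gains at least as much
as `χt`. -/
lemma weight_lt_weight_piecewise {c k : ℕ} (S : Set V) {χ χt : V → Fin c} {v : V}
    (hopt : ¬ ∃ ρ : V → Fin c, IsImprovingKNeighbor G ω (k - 1) χ ρ)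
    (himp : IsImprovingKNeighbor G ω k χ χt) (hvS : v ∈ S) (hv : v ∈ flipSet χ χt)
    (hbd : ∀ a b, G.Adj a b → a ∈ S → b ∉ S → χ b = χt b) :
    weight G ω χ < weight G ω (S.piecewise χt χ) := by
  obtain ⟨hcard, hlt⟩ := himp
  have hsplit := weight_piecewise_add_weight_piecewise G ω S χt χ χ χt hbd
  rw [Set.piecewise_same, Set.piecewise_same] at hsplit
  have hrest : (flipSet χ (S.piecewise χ χt)).card ≤ k - 1 := by
    have hsub : flipSet χ (S.piecewise χ χt) ⊆ (flipSet χ χt).erase v := by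
      intro x hx
      rw [mem_flipSet_piecewise_self_left] at hx
      exact mem_erase.mpr ⟨fun hxv => hx.1 (hxv ▸ hvS), hx.2⟩
    have := card_le_card hsub
    rw [card_erase_of_mem hv] at this
    omega
  have hle : weight G ω (S.piecewise χ χt) ≤ weight G ω χ :=
    not_lt.mp fun h => hopt ⟨_, hrest, h⟩
  change weight G ω χ < weight G ω χt at hlt
  linarith

end Colorings

lemma exists_mem_Icc_forall_ne_of_card_le {ι : Type*} (F : Finset ι) (d : ι → ℕ) {v : ι}
    (hv : v ∈ F) (hv0 : d v = 0) {k : ℕ} (hF : F.card ≤ k) :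
    ∃ r ∈ Icc 1 k, ∀ w ∈ F, d w ≠ r := by
  by_contra! h
  have hsub : range (k + 1) ⊆ F.image d := by
    intro r hr
    rcases Nat.eq_zero_or_pos r with rfl | hr0
    · exact mem_image.mpr ⟨v, hv, hv0⟩
    · obtain ⟨w, hw, hdw⟩ := h r (mem_Icc.mpr ⟨hr0, Nat.lt_succ_iff.mp (mem_range.mp hr)⟩)
      exact mem_image.mpr ⟨w, hw, hdw⟩
  have := (card_le_card hsub).trans card_image_le
  rw [card_range] at this
  omega

namespace SimpleGraph

variable {V : Type*} {G : SimpleGraph V}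

lemma edist_eq_of_adj_of_mem_ball_of_notMem_ball {a b c : V} {r : ℕ∞} (hab : G.Adj a b)
    (ha : a ∈ G.ball c r) (hb : b ∉ G.ball c r) : G.edist b c = r := by
  rw [mem_ball] at ha hb
  refine le_antisymm ?_ (not_lt.mp hb)
  calc G.edist b c ≤ G.edist b a + G.edist a c := G.edist_triangle
    _ = G.edist a c + 1 := by rw [edist_comm, edist_eq_one_iff_adj.mpr hab, add_comm]
    _ ≤ r := Order.add_one_le_of_lt ha

lemma reachable_and_dist_le_of_edist_le {u w : V} {n : ℕ} (h : G.edist u w ≤ n) :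
    G.Reachable u w ∧ G.dist u w ≤ n :=
  ⟨reachable_of_edist_ne_top (ne_top_of_le_ne_top (ENat.natCast_ne_top n) h),
    ENat.toNat_le_of_le_natCast h⟩

lemma apply_eq_of_edist_le {α : Type*} [Fintype V] {χ χ' : V → α} {v x : V} {k : ℕ}
    (hdist : ∀ w ∈ flipSet χ χ', ¬ G.Reachable v w ∨ k + 1 ≤ G.dist v w)
    (hx : G.edist x v ≤ k) : χ x = χ' x := by
  by_contra hne
  rw [edist_comm] at hx
  obtain ⟨hreach, hle⟩ := reachable_and_dist_le_of_edist_le hx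
  rcases hdist x (mem_flipSet.mpr hne) with h | h
  exacts [h hreach, by omega]

end SimpleGraph

theorem redundant_flip_prevention_general
    {V : Type*} [Fintype V] {c : ℕ}
    (G : SimpleGraph V) (ω : Sym2 V → ℚ) (k : ℕ)
    (χ χ' : V → Fin c)
    (hχ' : ¬ ∃ ρ : V → Fin c, IsImprovingKNeighbor G ω (k - 1) χ' ρ)
    (v : V)
    (hdist : ∀ w ∈ flipSet χ χ', ¬ G.Reachable v w ∨ k + 1 ≤ G.dist v w)
    (hnone : ¬ ∃ ρ : V → Fin c, IsImprovingKNeighbor G ω k χ ρ ∧ v ∈ flipSet χ ρ) :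
    ¬ ∃ ρ : V → Fin c, IsImprovingKNeighbor G ω k χ' ρ ∧ v ∈ flipSet χ' ρ := by
  rintro ⟨χt, himp, hv⟩
  obtain ⟨r, hr, hrF⟩ := exists_mem_Icc_forall_ne_of_card_le (flipSet χ' χt) (G.dist v) hv
    G.dist_self himp.1
  obtain ⟨hr1, hrk⟩ := mem_Icc.mp hr
  set N := G.ball v r
  have hvN : v ∈ N := SimpleGraph.mem_ball_self (by exact_mod_cast hr1)
  have hagreeN : ∀ x ∈ N, χ x = χ' x := fun x hx =>
    SimpleGraph.apply_eq_of_edist_le hdist (hx.le.trans (by exact_mod_cast hrk))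
  have hbd_dist : ∀ a b, G.Adj a b → a ∈ N → b ∉ N → G.edist b v = r := fun _ _ hab ha hb =>
    SimpleGraph.edist_eq_of_adj_of_mem_ball_of_notMem_ball hab ha hb
  have hbd_unflipped : ∀ a b, G.Adj a b → a ∈ N → b ∉ N → χ' b = χt b := fun a b hab ha hb => by
    by_contra hne
    refine hrF b (mem_flipSet.mpr hne) ?_
    rw [SimpleGraph.dist, G.edist_comm, hbd_dist a b hab ha hb, ENat.toNat_natCast]
  have hbd_agree : ∀ a b, G.Adj a b → a ∈ N → b ∉ N → χ b = χ' b := fun a b hab ha hb =>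
    SimpleGraph.apply_eq_of_edist_le hdist (by rw [hbd_dist a b hab ha hb]; exact_mod_cast hrk)
  have hgain := weight_lt_weight_piecewise G ω N hχ' himp hvN hv hbd_unflipped
  have htransfer := weight_piecewise_sub_weight_eq G ω N χt χ χ' hagreeN hbd_agree
  have hflip : ∀ x, x ∈ flipSet χ (N.piecewise χt χ) ↔ x ∈ N ∧ x ∈ flipSet χ' χt := fun x => by
    rw [mem_flipSet_piecewise_self_right]
    exact and_congr_right fun hxN => by simp only [mem_flipSet, hagreeN x hxN]
  refine hnone ⟨N.piecewise χt χ, ⟨?_, ?_⟩, (hflip v).mpr ⟨hvN, hv⟩⟩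
  · exact (card_le_card fun x hx => ((hflip x).mp hx).2).trans himp.1
  · change weight G ω χ < weight G ω (N.piecewise χt χ)
    linarith

/-- Let `χ` and `χ'` be `(k-1)`-optimal colorings and let `v` be a vertex of
distance at least `k+1` from every vertex of `D_flip(χ,χ')` (this includes
the case that no path exists). If no improving `k`-neighbor of `χ` flips `v`,
then no improving `k`-neighbor of `χ'` flips `v`. -/
theorem redundant_flip_prevention
    {V : Type*} [Fintype V] [DecidableEq V] {c : ℕ}
    (G : SimpleGraph V) (ω : Sym2 V → ℚ) (k : ℕ) (hk : 1 ≤ k)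
    (χ χ' : V → Fin c)
    (hχ : ¬ ∃ ρ : V → Fin c, IsImprovingKNeighbor G ω (k - 1) χ ρ)
    (hχ' : ¬ ∃ ρ : V → Fin c, IsImprovingKNeighbor G ω (k - 1) χ' ρ)
    (v : V)
    (hdist : ∀ w ∈ flipSet χ χ', ¬ G.Reachable v w ∨ k + 1 ≤ G.dist v w)
    (hnone : ¬ ∃ ρ : V → Fin c, IsImprovingKNeighbor G ω k χ ρ ∧ v ∈ flipSet χ ρ) :
    ¬ ∃ ρ : V → Fin c, IsImprovingKNeighbor G ω k χ' ρ ∧ v ∈ flipSet χ' ρ :=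
  redundant_flip_prevention_general G ω k χ χ' hχ' v hdist hnone
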